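/- arXiv:2311.10593 — 3 statements merged into one kernel-verified Lean document; each statement's English description precedes it below -/
import Mathlib

section
/- Let G be a K₂-hamiltonian finite simple graph and (W,X) a non-trivial partition of V(G). If the induced subgraph G[X] contains two adjacent vertices and |X| ≥ 3, then p(G[W]) < |X| − 1 and k(G[W]) < |X| − 1. -/
/- Definitions following "Generation and New Infinite Families of K₂-hypohamiltonian Graphs"
by Goedgebeur, Renders and Zamfirescu. -/

open scoped Classical

noncomputable section

namespace K2HypoPaper

variable {V : Type}

/-- A graph is *hamiltonian* if it contains a cycle passing through every vertex exactly once. -/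
def IsHamiltonianGraph (G : SimpleGraph V) : Prop :=
  ∃ (a : V) (p : G.Walk a a), p.IsHamiltonianCycle

/-- A graph is *K₂-hamiltonian* if deleting the two endpoints of any edge yields a
hamiltonian graph. -/
def IsK2Hamiltonian (G : SimpleGraph V) : Prop :=
  ∀ u v : V, G.Adj u v → IsHamiltonianGraph (G.induce {x : V | x ≠ u ∧ x ≠ v})

/-- A graph is *hypohamiltonian* if it is non-hamiltonian and every vertex-deleted
subgraph is hamiltonian. -/
def IsHypohamiltonian (G : SimpleGraph V) : Prop :=
  ¬ IsHamiltonianGraph G ∧ ∀ v : V, IsHamiltonianGraph (G.induce {x : V | x ≠ v})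

/-- A graph is *K₂-hypohamiltonian* if it is non-hamiltonian and K₂-hamiltonian. -/
def IsK2Hypohamiltonian (G : SimpleGraph V) : Prop :=
  ¬ IsHamiltonianGraph G ∧ IsK2Hamiltonian G

/-- A family of `n` pairwise vertex-disjoint paths covering all the vertices of `G`. -/
def IsPathCover {n : ℕ} (G : SimpleGraph V) (P : Fin n → (u : V) × (v : V) × G.Walk u v) : Prop :=
  (∀ i, (P i).2.2.IsPath) ∧
  (∀ i j, i ≠ j → ∀ x, x ∈ (P i).2.2.support → x ∉ (P j).2.2.support) ∧
  (∀ x : V, ∃ i, x ∈ (P i).2.2.support)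

/-- `p(G)`: the minimum number of pairwise vertex-disjoint paths needed to cover all
vertices of `G`. -/
def pathCoverNumber (G : SimpleGraph V) : ℕ :=
  sInf {n : ℕ | ∃ P : Fin n → (u : V) × (v : V) × G.Walk u v, IsPathCover G P}

/-- The vertices lying in components of `G` that are isolated vertices or isolated `K₂`'s
(a component of a simple graph has at most two vertices iff it is an isolated vertex or an
isolated edge together with its endpoints). -/
def IVerts (G : SimpleGraph V) : Set V :=
  {v : V | (G.connectedComponentMk v).supp.ncard ≤ 2}

/-- `|I(G)|`: the number of components of `G` that are isolated vertices or isolated `K₂`'s. -/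
def numIComponents (G : SimpleGraph V) : ℕ :=
  {c : G.ConnectedComponent | c.supp.ncard ≤ 2}.ncard

/-- `|V₁(G)|`: the number of vertices of degree `1` in `G`. -/
def degOneCount (G : SimpleGraph V) : ℕ :=
  {v : V | (G.neighborSet v).ncard = 1}.ncard

/-- Fuel-based implementation of the recursive definition of `k(G)`:
`k(G) = 0` if `G` is empty; `k(G) = max {1, ⌈|V₁(G)|/2⌉}` if `I(G) = ∅` but `G` is nonempty;
and `k(G) = |I(G)| + k(G − I(G))` otherwise. -/
def kAux : ℕ → (W : Type) → SimpleGraph W → ℕ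
  | 0, _, _ => 0
  | (m + 1), W, G =>
    if IsEmpty W then 0
    else if IVerts G = ∅ then max 1 ((degOneCount G + 1) / 2)
    else numIComponents G + kAux m ↥((IVerts G)ᶜ) (G.induce ((IVerts G)ᶜ))

/-- `k(G)` (the fuel `Fintype.card V` always suffices for the recursion to bottom out,
since removing the small components once leaves a graph with `I = ∅`). -/
def kNum [Fintype V] (G : SimpleGraph V) : ℕ := kAux (Fintype.card V) V G

/-! Let `vw` be an edge of `G[X]` and `x` a third vertex of `X`. Cutting the hamiltonian cycle of
`G - v - w` open at `x` gives a hamiltonian path starting at `x`. Since it starts outside `W`, its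
`|X| - 2` vertices outside `W` cut it into at most `|X| - 2` segments inside `W`, a path cover of
`G[W]`. It remains that `k(H) ≤ p(H)` for every graph `H`: a path has at most two vertices of
degree one in `H`, and every component with at most two vertices needs a path of its own. -/

open SimpleGraph

-- `(L.take 1).countP (· ∈ W)` is `1` if `L` starts inside `W`, and `0` otherwise.
theorem exists_chains_flatten_eq_filter (G : SimpleGraph V) (W : Set V) :
    ∀ L : List V, L.IsChain G.Adj →
    ∃ Ps : List (List V), (∀ l ∈ Ps, l ≠ [] ∧ l.IsChain G.Adj) ∧
      Ps.flatten = L.filter (· ∈ W) ∧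
      Ps.length ≤ L.countP (· ∉ W) + (L.take 1).countP (· ∈ W)
  | [], _ => ⟨[], by simp⟩
  | a :: L, hL => by
    obtain ⟨Ps, hPs, hflat, hlen⟩ := exists_chains_flatten_eq_filter G W L hL.tail
    by_cases ha : a ∈ W
    swap
    · have htake : (L.take 1).countP (· ∈ W) ≤ 1 := List.countP_le_length.trans (by simp)
      refine ⟨Ps, hPs, by simp [hflat, ha], ?_⟩
      simpa [ha] using hlen.trans (Nat.add_le_add_left htake _)
    rcases L with _ | ⟨b, L⟩
    · exact ⟨[[a]], by simp [ha]⟩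
    by_cases hb : b ∈ W
    · obtain ⟨l, Ps, rfl⟩ : ∃ l Ps', Ps = (b :: l) :: Ps' := by
        rcases Ps with _ | ⟨_ | ⟨c, l⟩, Ps⟩
        · simp [hb] at hflat
        · exact absurd rfl (hPs [] (by simp)).1
        · obtain ⟨rfl, -⟩ : c = b ∧ _ := by simpa [hb] using hflat
          exact ⟨l, Ps, rfl⟩
      refine ⟨(a :: b :: l) :: Ps, ?_, by simpa [ha, hb] using hflat,
        by simpa [ha, hb] using hlen⟩
      refine List.forall_mem_cons.2 ⟨⟨by simp, ?_⟩, fun l' hl' => hPs l' (by simp [hl'])⟩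
      exact (hPs _ (by simp)).2.cons_cons hL.rel
    · refine ⟨[a] :: Ps, ?_, by simpa [ha, hb] using hflat, by simpa [ha, hb] using hlen⟩
      exact List.forall_mem_cons.2 ⟨⟨by simp, .singleton a⟩, hPs⟩

theorem exists_isPathCover_induce_of_chains (G : SimpleGraph V) (W : Set V)
    (Ps : List (List V)) (hPs : ∀ l ∈ Ps, l ≠ [] ∧ l.IsChain G.Adj) (hnd : Ps.flatten.Nodup)
    (hW : ∀ x, x ∈ Ps.flatten ↔ x ∈ W) :
    ∃ P : Fin Ps.length → (u : W) × (v : W) × (G.induce W).Walk u v,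
      IsPathCover (G.induce W) P := by
  obtain ⟨hnd, hdisj⟩ := List.nodup_flatten.1 hnd
  let p (i : Fin Ps.length) := Walk.ofSupport Ps[i] (hPs _ (by simp)).1 (hPs _ (by simp)).2
  have hsub (i : Fin Ps.length) : ∀ x ∈ (p i).support, x ∈ W := by
    rw [Walk.support_ofSupport]
    exact fun x hx => (hW x).1 (List.mem_flatten_of_mem (by simp) hx)
  let P i : (u : W) × (v : W) × (G.induce W).Walk u v := ⟨_, _, (p i).induce W (hsub i)⟩
  have hsupp (i : Fin Ps.length) (x : W) : x ∈ (P i).2.2.support ↔ (x : V) ∈ Ps[i] := by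
    simp [P, p]
  refine ⟨P, fun i => ?_, fun i j hij x hi hj => ?_, fun x => ?_⟩
  · refine Walk.IsPath.of_map (f := (Embedding.induce W).toHom) ?_
    rw [Walk.map_induce]
    exact (Walk.isPath_def _).2 (by simpa [p] using hnd _ (by simp))
  · rw [hsupp] at hi hj
    rcases lt_or_gt_of_ne hij with h | h
    · exact hdisj.rel_get_of_lt h hi hj
    · exact hdisj.rel_get_of_lt h hj hi
  · obtain ⟨l, hl, hxl⟩ := List.mem_flatten.1 ((hW x).2 x.2)
    obtain ⟨i, hi, rfl⟩ := List.getElem_of_mem hl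
    exact ⟨⟨i, hi⟩, (hsupp _ x).2 hxl⟩

theorem exists_isPathCover_induce_of_isPath (G : SimpleGraph V) (W : Set V) {u v : V}
    {p : G.Walk u v} (hp : p.IsPath) (hu : u ∉ W) (hW : ∀ x ∈ W, x ∈ p.support) :
    ∃ (n : ℕ) (P : Fin n → (u : W) × (v : W) × (G.induce W).Walk u v),
      IsPathCover (G.induce W) P ∧ n ≤ p.support.countP (· ∉ W) := by
  obtain ⟨Ps, hPs, hflat, hlen⟩ :=
    exists_chains_flatten_eq_filter G W p.support p.isChain_adj_support
  obtain ⟨P, hP⟩ := exists_isPathCover_induce_of_chains G W Ps hPs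
    (hflat ▸ hp.support_nodup.filter _) (fun x => by simpa [hflat] using hW x)
  have htake : p.support.take 1 = [u] := by rw [← p.cons_tail_support]; rfl
  exact ⟨_, P, hP, by simpa [htake, hu] using hlen⟩

theorem countP_notMem_eq_ncard_diff {L : List V} (hL : L.Nodup) {S : Set V}
    (hS : ∀ x, x ∈ L ↔ x ∈ S) (W : Set V) : L.countP (· ∉ W) = (S \ W).ncard := by
  have hfilter : ((L.filter (· ∉ W)).toFinset : Set V) = S \ W := by ext; simp [hS]
  rw [List.countP_eq_length_filter, ← List.toFinset_card_of_nodup (hL.filter _),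
    ← Set.ncard_coe_finset, hfilter]

theorem exists_isPathCover_induce_of_isHamiltonianGraph (G : SimpleGraph V) {S W : Set V}
    (hS : IsHamiltonianGraph (G.induce S)) (hWS : W ⊆ S) {x : V} (hxS : x ∈ S) (hxW : x ∉ W) :
    ∃ (n : ℕ) (P : Fin n → (u : W) × (v : W) × (G.induce W).Walk u v),
      IsPathCover (G.induce W) P ∧ n ≤ (S \ W).ncard := by
  obtain ⟨a, c, hc⟩ := hS
  -- `IsHamiltonianGraph` carries the classical `DecidableEq S`, not the synthesized one.
  replace hc : c.IsHamiltonianCycle := by convert hc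
  have hx := hc.mem_support ⟨x, hxS⟩
  have hham := (hc.rotate hx).isHamiltonian_tail
  let p := (c.rotate _ hx).tail.reverse.map (Embedding.induce S).toHom
  have hp : p.IsPath := hham.isPath.reverse.map Subtype.val_injective
  have hpS (y : V) : y ∈ p.support ↔ y ∈ S := by
    simp only [p, Walk.support_map, Walk.support_reverse, List.mem_map, List.mem_reverse]
    exact ⟨fun ⟨z, _, hz⟩ => hz ▸ z.2,
      fun hy => ⟨⟨y, hy⟩, hham.mem_support _, rfl⟩⟩
  obtain ⟨n, P, hP, hn⟩ :=
    exists_isPathCover_induce_of_isPath G W hp hxW (fun y hy => (hpS y).2 (hWS hy))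
  exact ⟨n, P, hP, hn.trans_eq (countP_notMem_eq_ncard_diff hp.support_nodup hpS W)⟩

theorem _root_.SimpleGraph.Walk.IsPath.eq_or_eq_of_ncard_neighborSet_eq_one
    {G : SimpleGraph V} : ∀ {u v : V} {p : G.Walk u v}, p.IsPath →
      ∀ {x : V}, x ∈ p.support → (G.neighborSet x).ncard = 1 → x = u ∨ x = v
  | _, _, .nil, _, _, hx, _ => .inl (by simpa using hx)
  | u, _, .cons hub q, hp, x, hx, hdeg => by
    rw [Walk.cons_isPath_iff] at hp
    rcases List.mem_cons.1 (Walk.support_cons _ _ ▸ hx) with rfl | hx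
    · exact .inl rfl
    rcases hp.1.eq_or_eq_of_ncard_neighborSet_eq_one hx hdeg with rfl | rfl
    · cases q with
      | nil => exact .inr rfl
      | cons hxc q =>
        obtain ⟨y, hy⟩ := Set.ncard_eq_one.1 hdeg
        have hu : u ∈ G.neighborSet x := hub.symm
        have hc : _ ∈ G.neighborSet x := hxc
        rw [hy, Set.mem_singleton_iff] at hu hc
        exact (hp.2 (by simp [hu, ← hc])).elim
    · exact .inr rfl

theorem _root_.SimpleGraph.Reachable.mem_iVerts_iff {G : SimpleGraph V} {x y : V}
    (h : G.Reachable x y) : x ∈ IVerts G ↔ y ∈ IVerts G := by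
  simp only [IVerts, Set.mem_ofPred_eq, ConnectedComponent.eq.2 h]

/-- `IsPathCover` with an arbitrary index type. -/
def IsPathPartition {ι : Type*} (G : SimpleGraph V) (P : ι → (u : V) × (v : V) × G.Walk u v) :
    Prop :=
  (∀ i, (P i).2.2.IsPath) ∧
  (∀ i j, i ≠ j → ∀ x, x ∈ (P i).2.2.support → x ∉ (P j).2.2.support) ∧
  (∀ x : V, ∃ i, x ∈ (P i).2.2.support)

namespace IsPathPartition

variable {ι : Type*} {G : SimpleGraph V} {P : ι → (u : V) × (v : V) × G.Walk u v}

theorem reachable (i : ι) {x : V} (hx : x ∈ (P i).2.2.support) : G.Reachable (P i).1 x :=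
  ((P i).2.2.takeUntil x hx).reachable

theorem degOneCount_le [Finite ι] (hP : IsPathPartition G P) :
    degOneCount G ≤ 2 * Nat.card ι := by
  let ends : ι × Bool → V := fun ib => if ib.2 then (P ib.1).1 else (P ib.1).2.1
  have hsub : {v | (G.neighborSet v).ncard = 1} ⊆ Set.range ends := by
    intro x hx
    obtain ⟨i, hi⟩ := hP.2.2 x
    rcases (hP.1 i).eq_or_eq_of_ncard_neighborSet_eq_one hi hx with h | h
    · exact ⟨(i, true), h.symm⟩
    · exact ⟨(i, false), h.symm⟩
  calc degOneCount G ≤ (Set.range ends).ncard := Set.ncard_le_ncard hsub (Set.finite_range _)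
    _ ≤ Nat.card (ι × Bool) := by rw [← Nat.card_coe_set_eq]; exact Finite.card_range_le _
    _ = 2 * Nat.card ι := by simp [mul_comm]

theorem numIComponents_le [Finite ι] (hP : IsPathPartition G P) :
    numIComponents G ≤ Nat.card {i // (P i).1 ∈ IVerts G} := by
  let comp : {i // (P i).1 ∈ IVerts G} → G.ConnectedComponent :=
    fun i => G.connectedComponentMk (P i).1
  have hsub : {c : G.ConnectedComponent | c.supp.ncard ≤ 2} ⊆ Set.range comp := by
    intro c hc
    induction c using ConnectedComponent.ind with | h x => ?_
    obtain ⟨i, hi⟩ := hP.2.2 x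
    have hmk := ConnectedComponent.eq.2 (reachable i hi)
    exact ⟨⟨i, show (G.connectedComponentMk _).supp.ncard ≤ 2 from hmk ▸ hc⟩, hmk⟩
  calc numIComponents G ≤ (Set.range comp).ncard := Set.ncard_le_ncard hsub (Set.finite_range _)
    _ ≤ _ := by rw [← Nat.card_coe_set_eq]; exact Finite.card_range_le _

theorem exists_induce (hP : IsPathPartition G P) {s : Set V}
    (hs : ∀ x y, G.Reachable x y → (x ∈ s ↔ y ∈ s)) :
    ∃ Q : {i // (P i).1 ∈ s} → (u : s) × (v : s) × (G.induce s).Walk u v,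
      IsPathPartition (G.induce s) Q := by
  have hsub (i : {i // (P i).1 ∈ s}) : ∀ x ∈ (P i).2.2.support, x ∈ s :=
    fun x hx => (hs _ _ (reachable (P := P) i hx)).1 i.2
  let Q (i : {i // (P i).1 ∈ s}) : (u : s) × (v : s) × (G.induce s).Walk u v :=
    ⟨_, _, (P i).2.2.induce s (hsub i)⟩
  have hQ (i : {i // (P i).1 ∈ s}) (x : s) :
      x ∈ (Q i).2.2.support ↔ (x : V) ∈ (P i).2.2.support := by
    simp [Q]
  refine ⟨Q, fun i => ?_, fun i j hij x hi hj => ?_, fun x => ?_⟩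
  · refine Walk.IsPath.of_map (f := (Embedding.induce s).toHom) ?_
    rw [Walk.map_induce]
    exact hP.1 i
  · rw [hQ] at hi hj
    exact hP.2.1 i j (Subtype.coe_ne_coe.2 hij) x hi hj
  · obtain ⟨i, hi⟩ := hP.2.2 x
    exact ⟨⟨i, (hs _ _ (reachable (P := P) i hi)).2 x.2⟩, (hQ ⟨i, _⟩ x).2 hi⟩

theorem kAux_le : ∀ (fuel : ℕ) {V : Type} [Finite V] {G : SimpleGraph V} {ι : Type*}
    [Finite ι] {P : ι → (u : V) × (v : V) × G.Walk u v}, IsPathPartition G P →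
    Nat.card V ≤ fuel → kAux fuel V G ≤ Nat.card ι
  | 0, _, _, _, _, _, _, _, _ => by simp [kAux]
  | fuel + 1, V, _, G, ι, _, P, hP, hfuel => by
    rw [kAux]
    split_ifs with hV hI
    · exact Nat.zero_le _
    · obtain ⟨x⟩ := not_isEmpty_iff.1 hV
      obtain ⟨i, -⟩ := hP.2.2 x
      have hι : 0 < Nat.card ι := Finite.card_pos_iff.2 ⟨i⟩
      have hdeg := hP.degOneCount_le
      omega
    · obtain ⟨Q, hQ⟩ := hP.exists_induce (s := (IVerts G)ᶜ)
        (fun x y h => not_congr h.mem_iVerts_iff)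
      have hcard : Nat.card ((IVerts G)ᶜ : Set V) ≤ fuel := by
        have hpos := (Set.ncard_pos (s := IVerts G)).2 (Set.nonempty_iff_ne_empty.2 hI)
        have hsum := Set.ncard_add_ncard_compl (IVerts G)
        rw [Nat.card_coe_set_eq]
        omega
      have hsplit : Nat.card {i // (P i).1 ∈ IVerts G} +
          Nat.card {i // (P i).1 ∈ (IVerts G)ᶜ} = Nat.card ι := by
        have := Set.ncard_add_ncard_compl {i | (P i).1 ∈ IVerts G}
        rwa [← Nat.card_coe_set_eq, ← Nat.card_coe_set_eq] at this
      have hsmall := hP.numIComponents_le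
      have hrest := kAux_le fuel hQ hcard
      omega

end IsPathPartition

theorem kNum_le_of_isPathCover [Fintype V] {G : SimpleGraph V} {n : ℕ}
    {P : Fin n → (u : V) × (v : V) × G.Walk u v} (hP : IsPathCover G P) : kNum G ≤ n := by
  simpa [kNum] using IsPathPartition.kAux_le _ hP Nat.card_eq_fintype_card.le

theorem pathCoverNumber_le_of_isPathCover {G : SimpleGraph V} {n : ℕ}
    {P : Fin n → (u : V) × (v : V) × G.Walk u v} (hP : IsPathCover G P) :
    pathCoverNumber G ≤ n :=
  Nat.sInf_le ⟨P, hP⟩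

theorem typeA_typeB_obstruction_general (V : Type) [Fintype V] (G : SimpleGraph V)
    (hG : IsK2Hamiltonian G) (W X : Set V)
    (hdisj : Disjoint W X) (hunion : W ∪ X = Set.univ)
    (hadj : ∃ v ∈ X, ∃ w ∈ X, G.Adj v w) (hX3 : 3 ≤ X.ncard) :
    pathCoverNumber (G.induce W) < X.ncard - 1 ∧ kNum (G.induce W) < X.ncard - 1 := by
  obtain ⟨v, hvX, w, hwX, hvw⟩ := hadj
  have hrest : (X \ {v, w}).ncard = X.ncard - 2 := by
    rw [Set.ncard_sdiff (Set.pair_subset hvX hwX), Set.ncard_pair hvw.ne]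
  obtain ⟨x, hxX, hxvw⟩ : (X \ {v, w}).Nonempty := Set.nonempty_of_ncard_ne_zero (by omega)
  have hWS : W ⊆ {x | x ≠ v ∧ x ≠ w} := fun z hz =>
    ⟨ne_of_mem_of_not_mem hz (hdisj.notMem_of_mem_right hvX),
      ne_of_mem_of_not_mem hz (hdisj.notMem_of_mem_right hwX)⟩
  obtain ⟨n, P, hP, hn⟩ := exists_isPathCover_induce_of_isHamiltonianGraph G (hG v w hvw) hWS
    (show x ≠ v ∧ x ≠ w by simpa [not_or] using hxvw) (hdisj.notMem_of_mem_right hxX)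
  have hdiff : {x | x ≠ v ∧ x ≠ w} \ W ⊆ X \ {v, w} := fun z ⟨⟨hzv, hzw⟩, hzW⟩ =>
    ⟨(hunion ▸ Set.mem_univ z).resolve_left hzW, by simp [hzv, hzw]⟩
  have hnX : n < X.ncard - 1 := by
    have := (Set.ncard_le_ncard hdiff).trans_eq hrest
    omega
  exact ⟨(pathCoverNumber_le_of_isPathCover hP).trans_lt hnX,
    (kNum_le_of_isPathCover hP).trans_lt hnX⟩

/-- Lemma: type A / type B obstruction. Let `G` be a `K₂`-hamiltonian
graph and `(W, X)` a non-trivial partition of `V(G)`. If `G[X]` contains two adjacent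
vertices and `|X| ≥ 3`, then `p(G[W]) < |X| − 1` and `k(G[W]) < |X| − 1`. -/
theorem typeA_typeB_obstruction (V : Type) [Fintype V] (G : SimpleGraph V)
    (hG : IsK2Hamiltonian G) (W X : Set V)
    (hdisj : Disjoint W X) (hunion : W ∪ X = Set.univ)
    (hWne : W.Nonempty) (hXne : X.Nonempty)
    (hadj : ∃ v ∈ X, ∃ w ∈ X, G.Adj v w) (hX3 : 3 ≤ X.ncard) :
    pathCoverNumber (G.induce W) < X.ncard - 1 ∧ kNum (G.induce W) < X.ncard - 1 :=
  typeA_typeB_obstruction_general V G hG W X hdisj hunion hadj hX3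

end K2HypoPaper
end
end

section
/- Let G be a connected K₂-hamiltonian finite simple graph and (W,X) a non-trivial partition of V(G) with |X| > 1. If the induced subgraph G[X] contains no two adjacent vertices, then p(G[W − w]) < |X| and k(G[W − w]) < |X| for any vertex w ∈ W adjacent to some vertex in X. -/
/- Definitions following "Generation and New Infinite Families of K₂-hypohamiltonian Graphs"
by Goedgebeur, Renders and Zamfirescu. -/

open scoped Classical

noncomputable section

namespace K2HypoPaper

variable {V : Type}

/-! Deleting both ends of an edge `w x₀` with `x₀ ∈ X` leaves a hamiltonian graph; removing a
second vertex `x₁ ∈ X` from its hamiltonian cycle leaves a hamiltonian path of `G - w - x₀ - x₁`.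
The vertices of `W - w` are what remains of this path once the `|X| - 2` vertices of
`X - {x₀, x₁}` are cut out, so at most `|X| - 1` paths cover them. Finally `k(H) ≤ p(H)` for
every graph `H`: an optimal path cover spends a path of its own on each isolated vertex or
isolated edge, and every vertex of degree one is an end of one of its paths. -/

lemma _root_.List.IsChain.exists_chains_flatten_eq_filter {α : Type*} {r : α → α → Prop}
    (p : α → Bool) {l : List α} (hl : l.IsChain r) :
    ∃ bs : List (List α), bs.flatten = l.filter (fun x => !p x) ∧
      (∀ b ∈ bs, b.IsChain r) ∧ bs.length ≤ l.countP p + 1 := by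
  -- `acc` is the unfinished piece that the elements of `l` not satisfying `p` go on extending.
  suffices key : ∀ l acc : List α, (acc ++ l).IsChain r → ∃ bs : List (List α),
      bs.flatten = acc ++ l.filter (fun x => !p x) ∧ (∀ b ∈ bs, b.IsChain r) ∧
        bs.length ≤ l.countP p + 1 from key l [] hl
  intro l
  induction l with
  | nil => exact fun acc hacc => ⟨[acc], by simpa using hacc⟩
  | cons a l ih =>
    intro acc hacc
    by_cases ha : p a
    · obtain ⟨bs, hflat, hchain, hlen⟩ := ih [] (hacc.infix ⟨acc ++ [a], [], by simp⟩)
      refine ⟨acc :: bs, by simp [hflat, ha], ?_, by simp [ha]; omega⟩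
      exact List.forall_mem_cons.mpr ⟨hacc.prefix (List.prefix_append _ _), hchain⟩
    · obtain ⟨bs, hflat, hchain, hlen⟩ := ih (acc ++ [a]) (by simpa using hacc)
      exact ⟨bs, by simp [hflat, ha], hchain, by simpa [ha] using hlen⟩

lemma _root_.List.Nodup.length_le_ncard {α : Type*} {l : List α} (hl : l.Nodup) {s : Set α}
    (hs : s.Finite) (h : ∀ x ∈ l, x ∈ s) : l.length ≤ s.ncard := by
  classical
  rw [← List.toFinset_card_of_nodup hl, ← Set.ncard_coe_finset]
  exact Set.ncard_le_ncard (fun x hx => h x (List.mem_toFinset.mp hx)) hs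

lemma _root_.SimpleGraph.Walk.IsPath.two_le_ncard_neighborSet [Finite V] {G : SimpleGraph V}
    {u v x : V} {p : G.Walk u v} (hp : p.IsPath) (hx : x ∈ p.support) (hxu : x ≠ u)
    (hxv : x ≠ v) : 2 ≤ (G.neighborSet x).ncard := by
  obtain ⟨i, rfl, hi⟩ := SimpleGraph.Walk.mem_support_iff_exists_getVert.mp hx
  have hi0 : i ≠ 0 := by rintro rfl; exact hxu p.getVert_zero
  have hil : i < p.length := hi.lt_of_ne (by rintro rfl; exact hxv p.getVert_length)
  rw [← hp.ncard_neighborSet_toSubgraph_internal_eq_two hi0 hil]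
  exact Set.ncard_le_ncard (p.toSubgraph.neighborSet_subset _)

lemma exists_isPathCover_pathCoverNumber [Finite V] (G : SimpleGraph V) :
    ∃ P : Fin (pathCoverNumber G) → (u : V) × (v : V) × G.Walk u v, IsPathCover G P := by
  obtain ⟨n, ⟨e⟩⟩ := Finite.exists_equiv_fin V
  refine Nat.sInf_mem
    (s := {n | ∃ P : Fin n → (u : V) × (v : V) × G.Walk u v, IsPathCover G P})
    ⟨n, fun i => ⟨e.symm i, e.symm i, .nil⟩, fun _ => .nil, ?_, fun x => ⟨e x, by simp⟩⟩
  intro i j hij x hi hj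
  simp only [SimpleGraph.Walk.support_nil, List.mem_singleton] at hi hj
  exact hij (e.symm.injective (hi.symm.trans hj))

lemma one_le_pathCoverNumber [Finite V] [Nonempty V] (G : SimpleGraph V) :
    1 ≤ pathCoverNumber G := by
  obtain ⟨P, -, -, hcover⟩ := exists_isPathCover_pathCoverNumber G
  obtain ⟨i, -⟩ := hcover (Classical.arbitrary V)
  exact Nat.one_le_iff_ne_zero.mpr fun h => (h ▸ i).elim0

section PathCover

variable {G : SimpleGraph V}

lemma pathCoverNumber_le_of_chains (bs : List (List V)) (hchain : ∀ b ∈ bs, b.IsChain G.Adj)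
    (hnodup : bs.flatten.Nodup) (hcover : ∀ x, x ∈ bs.flatten) :
    pathCoverNumber G ≤ bs.length := by
  set cs := bs.filter (fun b => b ≠ [])
  have hcs : ∀ b ∈ cs, b ≠ [] ∧ b.IsChain G.Adj := fun b hb => by
    rw [List.mem_filter] at hb
    exact ⟨by simpa using hb.2, hchain b hb.1⟩
  have hflatten : cs.flatten = bs.flatten := List.flatten_filter_ne_nil
  obtain ⟨hnodup', hdisj⟩ := List.nodup_flatten.mp (hflatten ▸ hnodup)
  let P : Fin cs.length → (u : V) × (v : V) × G.Walk u v := fun i =>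
    ⟨_, _, .ofSupport cs[i] (hcs _ (List.getElem_mem _)).1 (hcs _ (List.getElem_mem _)).2⟩
  have hP : IsPathCover G P := by
    refine ⟨fun i => ?_, fun i j hij x hi hj => ?_, fun x => ?_⟩
    · simpa [P, SimpleGraph.Walk.isPath_def] using hnodup' _ (List.getElem_mem _)
    · simp only [P, SimpleGraph.Walk.support_ofSupport] at hi hj
      rcases lt_or_gt_of_ne (Fin.val_ne_of_ne hij) with h | h
      · exact List.pairwise_iff_getElem.mp hdisj _ _ _ _ h hi hj
      · exact List.pairwise_iff_getElem.mp hdisj _ _ _ _ h hj hi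
    · obtain ⟨b, hb, hx⟩ := List.mem_flatten.mp (hflatten ▸ hcover x)
      obtain ⟨i, hi, rfl⟩ := List.getElem_of_mem hb
      exact ⟨⟨i, hi⟩, by simpa [P] using hx⟩
  calc pathCoverNumber G ≤ cs.length := Nat.sInf_le ⟨P, hP⟩
    _ ≤ bs.length := List.length_filter_le _ _

lemma pathCoverNumber_induce_le_of_chains {S : Set V} (bs : List (List V))
    (hchain : ∀ b ∈ bs, b.IsChain G.Adj) (hnodup : bs.flatten.Nodup)
    (hmem : ∀ x, x ∈ bs.flatten ↔ x ∈ S) :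
    pathCoverNumber (G.induce S) ≤ bs.length := by
  lift bs to List (List S) using fun b hb x hx => (hmem x).1 (List.mem_flatten.2 ⟨b, hb, hx⟩)
  rw [← List.map_flatten] at hnodup hmem
  refine (pathCoverNumber_le_of_chains bs (fun b hb => ?_) (hnodup.of_map _)
    fun x => by simpa using (hmem x).2 x.2).trans_eq (List.length_map _).symm
  exact (List.isChain_map Subtype.val).mp (hchain _ (List.mem_map_of_mem hb))

lemma pathCoverNumber_induce_le_card {n : ℕ} {P : Fin n → (u : V) × (v : V) × G.Walk u v}
    (hP : IsPathCover G P) (T : Finset (Fin n)) {S : Set V}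
    (hS : ∀ x, x ∈ S ↔ ∃ i ∈ T, x ∈ (P i).2.2.support) :
    pathCoverNumber (G.induce S) ≤ T.card := by
  refine (pathCoverNumber_induce_le_of_chains (T.toList.map fun i => (P i).2.2.support)
    ?_ ?_ ?_).trans_eq (by simp)
  · simp only [List.mem_map]
    rintro _ ⟨i, -, rfl⟩
    exact (P i).2.2.isChain_adj_support
  · refine List.nodup_flatten.mpr ⟨?_, ?_⟩
    · simp only [List.mem_map]
      rintro _ ⟨i, -, rfl⟩
      exact (hP.1 i).support_nodup
    · exact List.Pairwise.map _ (fun i j hij => List.disjoint_left.mpr (hP.2.1 i j hij))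
        T.nodup_toList
  · intro x
    simp [hS]

lemma pathCoverNumber_induce_le_countP {l : List V} (hnodup : l.Nodup)
    (hchain : l.IsChain G.Adj) (X : Set V) {S : Set V}
    (hS : ∀ x, x ∈ S ↔ x ∈ l ∧ x ∉ X) :
    pathCoverNumber (G.induce S) ≤ l.countP (· ∈ X) + 1 := by
  obtain ⟨bs, hflat, hbs, hlen⟩ := hchain.exists_chains_flatten_eq_filter (· ∈ X)
  refine (pathCoverNumber_induce_le_of_chains bs hbs ?_ fun x => ?_).trans hlen
  · exact hflat ▸ hnodup.filter _
  · simp [hflat, hS]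

end PathCover

/-- Every vertex of degree one is an end of some path of the cover. -/
lemma degOneCount_le_two_mul_pathCoverNumber [Finite V] (G : SimpleGraph V) :
    degOneCount G ≤ 2 * pathCoverNumber G := by
  obtain ⟨P, hpath, -, hcover⟩ := exists_isPathCover_pathCoverNumber G
  have hends : {v | (G.neighborSet v).ncard = 1} ⊆
      Set.range (fun i => (P i).1) ∪ Set.range (fun i => (P i).2.1) := by
    intro x hx
    obtain ⟨i, hi⟩ := hcover x
    by_contra hend
    simp only [Set.mem_union, Set.mem_range, not_or, not_exists] at hend
    have := (hpath i).two_le_ncard_neighborSet hi (Ne.symm (hend.1 i)) (Ne.symm (hend.2 i))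
    rw [Set.mem_ofPred_eq] at hx
    omega
  have hrange : ∀ f : Fin (pathCoverNumber G) → V, (Set.range f).ncard ≤ pathCoverNumber G :=
    fun f => by simpa only [Nat.card_coe_set_eq, Nat.card_fin] using Finite.card_range_le f
  calc degOneCount G ≤ _ := Set.ncard_le_ncard hends
    _ ≤ _ := Set.ncard_union_le _ _
    _ ≤ 2 * pathCoverNumber G := by linarith [hrange fun i => (P i).1, hrange fun i => (P i).2.1]

/-- Each path of a cover lies in one component, so every small component takes up at least one
path to itself, and the paths in large components cover `G - I(G)`. -/
lemma numIComponents_add_pathCoverNumber_le [Finite V] (G : SimpleGraph V) :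
    numIComponents G + pathCoverNumber (G.induce (IVerts G)ᶜ) ≤ pathCoverNumber G := by
  obtain ⟨P, hP⟩ := exists_isPathCover_pathCoverNumber G
  set comp : Fin (pathCoverNumber G) → G.ConnectedComponent :=
    fun i => G.connectedComponentMk (P i).1
  have hcomp : ∀ i, ∀ x ∈ (P i).2.2.support, G.connectedComponentMk x = comp i :=
    fun i x hx => (SimpleGraph.ConnectedComponent.sound ((P i).2.2.takeUntil x hx).reachable).symm
  set T := Finset.univ.filter fun i => (comp i).supp.ncard ≤ 2
  have hsmall : numIComponents G ≤ T.card := by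
    refine (Set.ncard_le_ncard (t := comp '' T) ?_ (T.finite_toSet.image _)).trans
      ((Set.ncard_image_le T.finite_toSet).trans_eq (Set.ncard_coe_finset T))
    intro c hc
    obtain ⟨x, rfl⟩ := c.nonempty_supp
    obtain ⟨i, hi⟩ := hP.2.2 x
    exact ⟨i, by simpa [T, ← hcomp i x hi] using hc, (hcomp i x hi).symm⟩
  have hlarge : pathCoverNumber (G.induce (IVerts G)ᶜ) ≤ Tᶜ.card := by
    refine pathCoverNumber_induce_le_card hP Tᶜ fun x => ⟨fun hx => ?_, ?_⟩
    · obtain ⟨i, hi⟩ := hP.2.2 x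
      exact ⟨i, by simpa [T, IVerts, ← hcomp i x hi] using hx, hi⟩
    · rintro ⟨i, hiT, hi⟩
      simpa [T, IVerts, hcomp i x hi] using hiT
  have := T.card_add_card_compl
  rw [Fintype.card_fin] at this
  omega

lemma kAux_le_pathCoverNumber (m : ℕ) :
    ∀ {β : Type} [Finite β] (H : SimpleGraph β), kAux m β H ≤ pathCoverNumber H := by
  induction m with
  | zero => intros; exact Nat.zero_le _
  | succ m ih =>
    intro β _ H
    rw [kAux]
    split_ifs with hempty hI
    · exact Nat.zero_le _
    · have : Nonempty β := not_isEmpty_iff.mp hempty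
      exact max_le (one_le_pathCoverNumber H) (by
        have := degOneCount_le_two_mul_pathCoverNumber H; omega)
    · exact (Nat.add_le_add_left (ih _) _).trans (numIComponents_add_pathCoverNumber_le H)

lemma kNum_le_pathCoverNumber [Fintype V] (G : SimpleGraph V) :
    kNum G ≤ pathCoverNumber G :=
  kAux_le_pathCoverNumber _ G

lemma IsHamiltonianGraph.exists_nodup_isChain_mem_iff_ne {H : SimpleGraph V}
    (h : IsHamiltonianGraph H) (v : V) :
    ∃ l : List V, l.Nodup ∧ l.IsChain H.Adj ∧ ∀ x, x ∈ l ↔ x ≠ v := by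
  obtain ⟨_, c, hc⟩ := h
  set q := (c.rotate v (hc.mem_support v)).tail
  have hq : q.IsHamiltonian := (hc.rotate _).isHamiltonian_tail
  have hsplit : q.support.dropLast ++ [v] = q.support := by simp
  have hnodup := hq.isPath.support_nodup
  rw [← hsplit, List.nodup_append] at hnodup
  refine ⟨q.support.dropLast, hnodup.1, q.isChain_adj_support.prefix (List.dropLast_prefix _),
    fun x => ⟨fun hx hxv => ?_, fun hxv => ?_⟩⟩
  · exact hnodup.2.2 x hx v (List.mem_singleton_self v) hxv
  · have hx := hq.mem_support x
    rw [← hsplit, List.mem_append, List.mem_singleton] at hx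
    exact hx.resolve_right hxv

lemma IsHamiltonianGraph.exists_nodup_isChain_induce {G : SimpleGraph V} {S : Set V}
    (h : IsHamiltonianGraph (G.induce S)) {v : V} (hv : v ∈ S) :
    ∃ l : List V, l.Nodup ∧ l.IsChain G.Adj ∧ ∀ x, x ∈ l ↔ x ∈ S ∧ x ≠ v := by
  obtain ⟨l, hnodup, hchain, hmem⟩ := h.exists_nodup_isChain_mem_iff_ne ⟨v, hv⟩
  refine ⟨l.map Subtype.val, hnodup.map Subtype.val_injective,
    (List.isChain_map Subtype.val).mpr hchain, fun x => ?_⟩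
  simp [hmem]

theorem nonAdj_typeA_typeB_general (V : Type) [Fintype V] (G : SimpleGraph V)
    (hG : IsK2Hamiltonian G) (W X : Set V)
    (hdisj : Disjoint W X) (hunion : W ∪ X = Set.univ)
    (hX1 : 1 < X.ncard)
    (w : V) (hw : w ∈ W) (hwadj : ∃ x ∈ X, G.Adj w x) :
    pathCoverNumber (G.induce (W \ {w})) < X.ncard ∧
      kNum (G.induce (W \ {w})) < X.ncard := by
  have hW : ∀ x, x ∈ W ↔ x ∉ X := fun x => ⟨fun h => hdisj.notMem_of_mem_left h,
    fun h => (hunion ▸ Set.mem_univ x : x ∈ W ∪ X).resolve_right h⟩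
  obtain ⟨x₀, hx₀, hwx₀⟩ := hwadj
  obtain ⟨x₁, hx₁, hx₁₀⟩ := Set.exists_ne_of_one_lt_ncard hX1 x₀
  have hx₁w : x₁ ≠ w := fun h => (hW w).mp hw (h ▸ hx₁)
  obtain ⟨l, hnodup, hchain, hl⟩ :=
    (hG w x₀ hwx₀).exists_nodup_isChain_induce (v := x₁) ⟨hx₁w, hx₁₀⟩
  have hcount : l.countP (· ∈ X) ≤ X.ncard - 2 := by
    rw [← Set.ncard_pair hx₁₀, ← Set.ncard_sdiff (Set.pair_subset hx₁ hx₀),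
      List.countP_eq_length_filter]
    refine (hnodup.filter _).length_le_ncard X.toFinite.sdiff fun x hx => ?_
    simp_all
  have hp : pathCoverNumber (G.induce (W \ {w})) < X.ncard := by
    refine (pathCoverNumber_induce_le_countP hnodup hchain X fun x => ?_).trans_lt (by omega)
    simp only [Set.mem_sdiff, Set.mem_singleton_iff, hl, Set.mem_ofPred_eq, hW]
    grind
  exact ⟨hp, (kNum_le_pathCoverNumber _).trans_lt hp⟩

/-- Lemma: non-adjacent type A and B. Let `G` be a connected
`K₂`-hamiltonian graph and `(W, X)` a non-trivial partition of `V(G)` with `|X| > 1`.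
If `G[X]` contains no two adjacent vertices, then `p(G[W − w]) < |X|` and
`k(G[W − w]) < |X|` for any `w ∈ W` adjacent to a vertex in `X`. -/
theorem nonAdj_typeA_typeB (V : Type) [Fintype V] (G : SimpleGraph V)
    (hconn : G.Connected) (hG : IsK2Hamiltonian G) (W X : Set V)
    (hdisj : Disjoint W X) (hunion : W ∪ X = Set.univ)
    (hWne : W.Nonempty) (hXne : X.Nonempty) (hX1 : 1 < X.ncard)
    (hindep : ∀ v ∈ X, ∀ w ∈ X, ¬ G.Adj v w)
    (w : V) (hw : w ∈ W) (hwadj : ∃ x ∈ X, G.Adj w x) :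
    pathCoverNumber (G.induce (W \ {w})) < X.ncard ∧
      kNum (G.induce (W \ {w})) < X.ncard :=
  nonAdj_typeA_typeB_general V G hG W X hdisj hunion hX1 w hw hwadj

end K2HypoPaper
end
end

section
/- Let G be a K₂-hypohamiltonian finite simple graph containing a 4-cycle with vertices u, v, w, x in this cyclic order (so uv, vw, wx, xu are edges of G). Then u has at least two neighbours lying outside N[w]. -/
/- Definitions following "Generation and New Infinite Families of K₂-hypohamiltonian Graphs"
by Goedgebeur, Renders and Zamfirescu. -/

open scoped Classical

noncomputable section

namespace K2HypoPaper

variable {V : Type}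

/-- `N[v]`: the closed neighbourhood of `v` in `G`, i.e. `v` together with all its
neighbours. -/
def closedNbhd (G : SimpleGraph V) (v : V) : Set V :=
  insert v (G.neighborSet v)

/- A hamiltonian cycle of `G - v - w` passes through `u`. If `w` were adjacent to a
cycle-neighbour `c` of `u`, replacing the edge `uc` by the path `u v w c` would give a hamiltonian
cycle of `G`. So the two cycle-neighbours of `u`, which are distinct and differ from `w`, lie
outside `N[w]`. -/

end K2HypoPaper

namespace SimpleGraph.Walk

variable {α : Type*} [DecidableEq α] {G : SimpleGraph α}

lemma IsHamiltonianCycle.reverse {a : α} {p : G.Walk a a} (hp : p.IsHamiltonianCycle) :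
    p.reverse.IsHamiltonianCycle := by
  have := hp.finite
  have := Fintype.ofFinite α
  rw [isHamiltonianCycle_iff_isCycle_and_length_eq] at hp ⊢
  exact ⟨hp.1.reverse, by rw [length_reverse, hp.2]⟩

lemma IsHamiltonianCycle.exists_isPath_support_eq_of_induce {s : Set α} {a : s}
    {p : (G.induce s).Walk a a} (hp : p.IsHamiltonianCycle) :
    ∃ r : G.Walk p.snd a, r.IsPath ∧ ∀ y, y ∈ r.support ↔ y ∈ s := by
  let r : G.Walk p.snd a := p.tail.map (Embedding.induce s).toHom
  have hsupp : r.support = p.tail.support.map Subtype.val := support_map _ _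
  refine ⟨r, hp.isCycle.isPath_tail.map Subtype.val_injective, fun y => ?_⟩
  rw [hsupp, List.mem_map]
  exact ⟨fun ⟨z, _, hz⟩ => hz ▸ z.2, fun hy => ⟨⟨y, hy⟩, hp.isHamiltonian_tail.mem_support _, rfl⟩⟩

end SimpleGraph.Walk

namespace K2HypoPaper

open SimpleGraph

variable {G : SimpleGraph V}

lemma IsHamiltonianGraph.exists_isHamiltonianCycle [DecidableEq V] (hG : IsHamiltonianGraph G)
    (a : V) : ∃ p : G.Walk a a, p.IsHamiltonianCycle := by
  obtain ⟨b, p, hp⟩ := hG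
  -- `hp` carries the classical `DecidableEq` instance baked into `IsHamiltonianGraph`.
  have hp' : p.IsHamiltonianCycle := by convert hp
  exact ⟨p.rotate a (hp'.mem_support a), hp'.rotate _⟩

section Detour

variable {v w : V} {a : {y | y ≠ v ∧ y ≠ w}} {p : (G.induce {y | y ≠ v ∧ y ≠ w}).Walk a a}

lemma isHamiltonianGraph_of_adj_snd (hp : p.IsHamiltonianCycle)
    (hav : G.Adj a v) (hvw : G.Adj v w) (hw : G.Adj w p.snd) : IsHamiltonianGraph G := by
  obtain ⟨r, hr, hsupp⟩ := hp.exists_isPath_support_eq_of_induce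
  have haw : (a : V) ≠ w := a.2.2
  have hvw' := G.ne_of_adj hvw
  refine ⟨a, .cons hav (.cons hvw (.cons hw r)), ?_⟩
  rw [Walk.isHamiltonianCycle_iff_isCycle_and_support_count_tail_eq_one, Walk.cons_isCycle_iff,
    Walk.support_cons, List.tail_cons]
  have hpath : (Walk.cons hvw (.cons hw r)).IsPath := by
    simp only [Walk.cons_isPath_iff, Walk.support_cons, List.mem_cons, hsupp, Set.mem_ofPred_eq]
    tauto
  refine ⟨⟨hpath, ?_⟩, hpath.isHamiltonian_of_mem fun y => ?_⟩
  · simp only [Walk.edges_cons, List.mem_cons, Sym2.eq_iff, not_or]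
    refine ⟨by tauto, by tauto, fun h => ((hsupp v).mp (r.snd_mem_support_of_mem_edges h)).1 rfl⟩
  · simp only [Walk.support_cons, List.mem_cons, hsupp, Set.mem_ofPred_eq]
    tauto

lemma snd_mem_neighborSet_diff_closedNbhd (hG : ¬IsHamiltonianGraph G)
    (hp : p.IsHamiltonianCycle) (hav : G.Adj a v) (hvw : G.Adj v w) :
    (p.snd : V) ∈ G.neighborSet a \ closedNbhd G w := by
  refine ⟨p.adj_snd hp.not_nil, ?_⟩
  rintro (hw | hadj)
  · exact p.snd.2.2 hw
  · exact hG (isHamiltonianGraph_of_adj_snd hp hav hvw hadj)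

end Detour

theorem fourCycle_obstruction_general (V : Type) [Fintype V] (G : SimpleGraph V)
    (hG : IsK2Hypohamiltonian G) (u v w x : V)
    (hdist : u ≠ v ∧ u ≠ w ∧ u ≠ x ∧ v ≠ w ∧ v ≠ x ∧ w ≠ x)
    (huv : G.Adj u v) (hvw : G.Adj v w) :
    2 ≤ (G.neighborSet u \ closedNbhd G w).ncard := by
  obtain ⟨p, hp⟩ := (hG.2 v w hvw).exists_isHamiltonianCycle ⟨u, hdist.1, hdist.2.1⟩
  have hc := snd_mem_neighborSet_diff_closedNbhd hG.1 hp huv hvw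
  have hb := snd_mem_neighborSet_diff_closedNbhd hG.1 hp.reverse huv hvw
  have hcb : (p.snd : V) ≠ p.reverse.snd := by
    rw [Walk.snd_reverse]
    exact Subtype.val_injective.ne hp.isCycle.snd_ne_penultimate
  calc 2 = ({(p.snd : V), (p.reverse.snd : V)} : Set V).ncard := (Set.ncard_pair hcb).symm
    _ ≤ _ := Set.ncard_le_ncard (Set.insert_subset hc (Set.singleton_subset_iff.mpr hb))
        (Set.toFinite _)

/-- 4-cycle obstruction lemma. Let `G` be a `K₂`-hypohamiltonian graph
containing a `4`-cycle `uvwx`. Then `u` has at least two neighbours not in `N[w]`. -/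
theorem fourCycle_obstruction (V : Type) [Fintype V] (G : SimpleGraph V)
    (hG : IsK2Hypohamiltonian G) (u v w x : V)
    (hdist : u ≠ v ∧ u ≠ w ∧ u ≠ x ∧ v ≠ w ∧ v ≠ x ∧ w ≠ x)
    (huv : G.Adj u v) (hvw : G.Adj v w) (hwx : G.Adj w x) (hxu : G.Adj x u) :
    2 ≤ (G.neighborSet u \ closedNbhd G w).ncard :=
  fourCycle_obstruction_general V G hG u v w x hdist huv hvw

end K2HypoPaper
end
end
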